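/- arXiv:1808.02376 — 4 statements merged into one kernel-verified Lean document; each statement's English description precedes it below -/
import Mathlib

section
/- A segment J at level ℓ ≥ 3 belongs to the periodic interaction list of segment I at the same level if and only if their cyclic index distance d satisfies 2 ≤ d ≤ 3 when the indices of I and J have parents that are cyclic neighbors; equivalently, for indices i, j ∈ Z/2^ℓ with ℓ ≥ 3 and 2^ℓ ≥ 16, j ∈ IL(i) iff the cyclic distance between i and j is 2 or 3 and ⌈j/2⌉ ∈ {⌈i/2⌉ - 1, ⌈i/2⌉, ⌈i/2⌉ + 1} mod 2^{ℓ-1}. -/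
/-- Periodic neighbor list at a level with cyclic indices. -/
def NL {n : ℕ} (i : ZMod n) : Finset (ZMod n) := {i - 1, i, i + 1}

/-- Parent of a level-ℓ cyclic index (0-based: parent of `i` is `⌊i/2⌋`). -/
def par (ℓ : ℕ) (i : ZMod (2 ^ ℓ)) : ZMod (2 ^ (ℓ - 1)) := ((i.val / 2 : ℕ) : ZMod (2 ^ (ℓ - 1)))

/-- Children of a level-(ℓ-1) cyclic index `j` are the level-ℓ indices `2j` and `2j+1`. -/
def children (ℓ : ℕ) (j : ZMod (2 ^ (ℓ - 1))) : Finset (ZMod (2 ^ ℓ)) :=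
  {((2 * j.val : ℕ) : ZMod (2 ^ ℓ)), ((2 * j.val + 1 : ℕ) : ZMod (2 ^ ℓ))}

/-- Periodic interaction list. -/
def IL (ℓ : ℕ) (i : ZMod (2 ^ ℓ)) : Finset (ZMod (2 ^ ℓ)) :=
  (NL (par ℓ i)).biUnion (children ℓ) \ NL i

/-- Cyclic index distance `min(|i-j|, n-|i-j|)`. -/
def cdist {n : ℕ} (i j : ZMod n) : ℕ := min (i - j).val (j - i).val

lemma two_mul_pow (ℓ : ℕ) (hℓ : 1 ≤ ℓ) : 2 ^ ℓ = 2 * 2 ^ (ℓ - 1) := by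
  conv_lhs => rw [show ℓ = (ℓ - 1) + 1 from (Nat.succ_pred_eq_of_pos hℓ).symm]
  ring

lemma mem_children_iff (ℓ : ℕ) (hℓ : 1 ≤ ℓ) (j : ZMod (2 ^ ℓ)) (k : ZMod (2 ^ (ℓ - 1))) :
    j ∈ children ℓ k ↔ par ℓ j = k := by
  haveI : NeZero (2 ^ ℓ) := ⟨by positivity⟩
  haveI : NeZero (2 ^ (ℓ - 1)) := ⟨by positivity⟩
  have hn : 2 ^ ℓ = 2 * 2 ^ (ℓ - 1) := two_mul_pow ℓ hℓ
  have hk : k.val < 2 ^ (ℓ - 1) := k.val_lt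
  have h2k : 2 * k.val < 2 ^ ℓ := by omega
  have h2k1 : 2 * k.val + 1 < 2 ^ ℓ := by omega
  constructor
  · intro h
    simp only [children, Finset.mem_insert, Finset.mem_singleton] at h
    rcases h with h | h
    · subst h
      simp only [par, ZMod.val_cast_of_lt h2k]
      rw [Nat.mul_div_cancel_left _ (by norm_num)]
      simp [ZMod.natCast_val, ZMod.cast_id]
    · subst h
      simp only [par, ZMod.val_cast_of_lt h2k1]
      rw [show (2 * k.val + 1) / 2 = k.val by omega]
      simp [ZMod.natCast_val, ZMod.cast_id]
  · intro h
    have hq : j.val / 2 < 2 ^ (ℓ - 1) := by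
      have := j.val_lt; omega
    have hkv : k.val = j.val / 2 := by
      rw [← h]; simp [par, ZMod.val_cast_of_lt hq]
    have hj : j = ((j.val : ℕ) : ZMod (2 ^ ℓ)) := by simp [ZMod.natCast_val, ZMod.cast_id]
    simp only [children, Finset.mem_insert, Finset.mem_singleton, hkv]
    rcases Nat.even_or_odd j.val with he | ho
    · left; conv_lhs => rw [hj]
      exact congrArg Nat.cast (by rcases he with ⟨c, hc⟩; omega)
    · right; conv_lhs => rw [hj]
      exact congrArg Nat.cast (by rcases ho with ⟨c, hc⟩; omega)

lemma eq_cast_of_val_eq {n : ℕ} [NeZero n] {x : ZMod n} {t : ℕ} (h : x.val = t) :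
    x = (t : ZMod n) := by
  rw [← h]; simp [ZMod.natCast_val, ZMod.cast_id]

lemma val_sub' {n : ℕ} [NeZero n] (i j : ZMod n) :
    (j - i).val = (j.val + n - i.val) % n := by
  have hi : i.val ≤ j.val + n := by have := i.val_lt; omega
  have : j - i = ((j.val + n - i.val : ℕ) : ZMod n) := by
    push_cast [Nat.cast_sub hi]
    simp [ZMod.natCast_val, ZMod.cast_id, ZMod.natCast_self]
  rw [this, ZMod.val_natCast]

lemma cdist_le_right {n : ℕ} [NeZero n] (i j : ZMod n) (t : ℕ)
    (h : (j.val + n - i.val) % n ≤ t) : cdist i j ≤ t :=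
  le_trans (min_le_right _ _) (by rw [val_sub']; exact h)

lemma cdist_le_left {n : ℕ} [NeZero n] (i j : ZMod n) (t : ℕ)
    (h : (i.val + n - j.val) % n ≤ t) : cdist i j ≤ t :=
  le_trans (min_le_left _ _) (by rw [val_sub']; exact h)

lemma mod_helper {a b n : ℕ} (hab : a ≤ b) (hb : b - a < n) : (b + n - a) % n = b - a := by
  rw [show b + n - a = (b - a) + n by omega, Nat.add_mod_right, Nat.mod_eq_of_lt hb]

lemma mem_NL_iff {n : ℕ} (hn : 4 ≤ n) (i j : ZMod n) : j ∈ NL i ↔ cdist i j ≤ 1 := by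
  haveI : NeZero n := ⟨by omega⟩
  haveI : Fact (1 < n) := ⟨by omega⟩
  simp only [NL, Finset.mem_insert, Finset.mem_singleton]
  constructor
  · rintro (rfl | rfl | rfl)
    · refine le_trans (min_le_left _ _) ?_
      rw [show i - (i - 1) = 1 by ring, ZMod.val_one]
    · simp [cdist, sub_self, ZMod.val_zero]
    · refine le_trans (min_le_right _ _) ?_
      rw [show i + 1 - i = 1 by ring, ZMod.val_one]
  · intro h
    rcases min_le_iff.mp h with h | h
    · interval_cases hv : (i - j).val
      · right; left
        have : i - j = 0 := by rwa [← ZMod.val_eq_zero]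
        exact (sub_eq_zero.mp this).symm
      · left
        have : i - j = ((1 : ℕ) : ZMod n) := eq_cast_of_val_eq hv
        push_cast at this
        linear_combination -this
    · interval_cases hv : (j - i).val
      · right; left
        have : j - i = 0 := by rwa [← ZMod.val_eq_zero]
        exact (sub_eq_zero.mp this)
      · right; right
        have : j - i = ((1 : ℕ) : ZMod n) := eq_cast_of_val_eq hv
        push_cast at this
        linear_combination this

lemma cdist_le_three (ℓ : ℕ) (hℓ : 3 ≤ ℓ) (i j : ZMod (2 ^ ℓ))
    (h : par ℓ j ∈ NL (par ℓ i)) : cdist i j ≤ 3 := by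
  haveI : NeZero (2 ^ ℓ) := ⟨by positivity⟩
  haveI : NeZero (2 ^ (ℓ - 1)) := ⟨by positivity⟩
  have hnm : 2 ^ ℓ = 2 * 2 ^ (ℓ - 1) := two_mul_pow ℓ (by omega)
  have hm4 : 4 ≤ 2 ^ (ℓ - 1) := by
    have : 2 ^ 2 ≤ 2 ^ (ℓ - 1) := Nat.pow_le_pow_right (by norm_num) (by omega)
    simpa using this
  have ha : i.val < 2 ^ ℓ := i.val_lt
  have hb : j.val < 2 ^ ℓ := j.val_lt
  have haP : i.val / 2 < 2 ^ (ℓ - 1) := by omega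
  have hbQ : j.val / 2 < 2 ^ (ℓ - 1) := by omega
  simp only [NL, Finset.mem_insert, Finset.mem_singleton, par] at h
  rcases h with h | h | h
  · -- par j = par i - 1
    have h' : ((j.val / 2 + 1 : ℕ) : ZMod (2 ^ (ℓ - 1))) = ((i.val / 2 : ℕ) : ZMod (2 ^ (ℓ - 1))) := by
      push_cast
      linear_combination h
    have hme : i.val / 2 = (j.val / 2 + 1) % 2 ^ (ℓ - 1) := by
      have h2 := ((ZMod.natCast_eq_natCast_iff _ _ _).mp h').symm
      unfold Nat.ModEq at h2
      rwa [Nat.mod_eq_of_lt haP] at h2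
    rcases Nat.lt_or_ge (j.val / 2 + 1) (2 ^ (ℓ - 1)) with hc | hc
    · rw [Nat.mod_eq_of_lt hc] at hme
      refine cdist_le_left _ _ _ ?_
      rw [mod_helper (by omega) (by omega)]
      omega
    · have hb2 : j.val / 2 = 2 ^ (ℓ - 1) - 1 := by omega
      have ha2 : i.val / 2 = 0 := by
        rw [hme, show j.val / 2 + 1 = 2 ^ (ℓ - 1) by omega, Nat.mod_self]
      refine cdist_le_left _ _ _ ?_
      rw [Nat.mod_eq_of_lt (by omega)]
      omega
  · -- par j = par i
    have hme : j.val / 2 = i.val / 2 := by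
      have h2 := (ZMod.natCast_eq_natCast_iff _ _ _).mp h
      unfold Nat.ModEq at h2
      rwa [Nat.mod_eq_of_lt hbQ, Nat.mod_eq_of_lt haP] at h2
    rcases Nat.le_total i.val j.val with hab | hab
    · refine cdist_le_right _ _ _ ?_
      rw [mod_helper hab (by omega)]
      omega
    · refine cdist_le_left _ _ _ ?_
      rw [mod_helper hab (by omega)]
      omega
  · -- par j = par i + 1
    have h' : ((j.val / 2 : ℕ) : ZMod (2 ^ (ℓ - 1))) = ((i.val / 2 + 1 : ℕ) : ZMod (2 ^ (ℓ - 1))) := by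
      push_cast
      linear_combination h
    have hme : j.val / 2 = (i.val / 2 + 1) % 2 ^ (ℓ - 1) := by
      have h2 := (ZMod.natCast_eq_natCast_iff _ _ _).mp h'
      unfold Nat.ModEq at h2
      rwa [Nat.mod_eq_of_lt hbQ] at h2
    rcases Nat.lt_or_ge (i.val / 2 + 1) (2 ^ (ℓ - 1)) with hc | hc
    · rw [Nat.mod_eq_of_lt hc] at hme
      refine cdist_le_right _ _ _ ?_
      rw [mod_helper (by omega) (by omega)]
      omega
    · have ha2 : i.val / 2 = 2 ^ (ℓ - 1) - 1 := by omega
      have hb2 : j.val / 2 = 0 := by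
        rw [hme, show i.val / 2 + 1 = 2 ^ (ℓ - 1) by omega, Nat.mod_self]
      refine cdist_le_right _ _ _ ?_
      rw [Nat.mod_eq_of_lt (by omega)]
      omega

/-- for ℓ ≥ 3 with 2^ℓ ≥ 16, `j` belongs to the periodic interaction
list of `i` iff their cyclic distance is 2 or 3 and their parents are cyclic
neighbors. -/
theorem mem_interaction_list_iff (ℓ : ℕ) (hℓ : 3 ≤ ℓ) (h16 : 16 ≤ 2 ^ ℓ)
    (i j : ZMod (2 ^ ℓ)) :
    j ∈ IL ℓ i ↔ (cdist i j = 2 ∨ cdist i j = 3) ∧ par ℓ j ∈ NL (par ℓ i) := by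
  have h4 : 4 ≤ 2 ^ ℓ := by omega
  rw [IL, Finset.mem_sdiff, Finset.mem_biUnion]
  constructor
  · rintro ⟨⟨k, hk, hjk⟩, hnl⟩
    have hpar : par ℓ j = k := (mem_children_iff ℓ (by omega) j k).mp hjk
    subst hpar
    have h2 : ¬ cdist i j ≤ 1 := fun hc => hnl ((mem_NL_iff h4 i j).mpr hc)
    have h3 : cdist i j ≤ 3 := cdist_le_three ℓ hℓ i j hk
    exact ⟨by omega, hk⟩
  · rintro ⟨hc, hp⟩
    refine ⟨⟨par ℓ j, hp, (mem_children_iff ℓ (by omega) j _).mpr rfl⟩, fun hnl => ?_⟩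
    have := (mem_NL_iff h4 i j).mp hnl
    omega
end

section
/- The number of parameters in the linear H^2 neural network satisfies N_p^{H^2} = 2^L m^2 (2 n_b^{(ad)} + 1) + N r + 2 Σ_{ℓ=2}^{L-1} 2^{ℓ+1} r^2 + Σ_{ℓ=2}^{L} 2^ℓ r^2 (2 n_b^{(ℓ)} + 1) + 2^L r m ≤ 3 N m (2 n_b + 3), where n_b = max(n_b^{(ad)}, max_ℓ n_b^{(ℓ)}), under the assumptions r ≤ m and N = 2^L m. -/
open Finset

/-! Every term is at most `2 ^ L * m ^ 2` times a factor, since `r ≤ m`, every band size is at most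
`n_b`, and a sum of distinct powers `2 ^ ℓ` with `ℓ < n` is less than `2 ^ n`. The factors add up to
`(2 n_b + 1) + 1 + 4 + 2 (2 n_b + 1) + 1 = 3 (2 n_b + 3)`. -/

lemma sum_two_pow_mul_le {s : Finset ℕ} {n c : ℕ} (f : ℕ → ℕ) (hs : ∀ k ∈ s, k < n)
    (hf : ∀ k ∈ s, f k ≤ c) : ∑ k ∈ s, 2 ^ k * f k ≤ 2 ^ n * c :=
  calc ∑ k ∈ s, 2 ^ k * f k
      ≤ ∑ k ∈ s, 2 ^ k * c := sum_le_sum fun k hk ↦ Nat.mul_le_mul_left _ (hf k hk)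
    _ = (∑ k ∈ s, 2 ^ k) * c := (sum_mul ..).symm
    _ ≤ 2 ^ n * c := Nat.mul_le_mul_right _ (Nat.geomSum_lt le_rfl hs).le

theorem h2_linear_param_count_general (L m r N : ℕ)
    (hrm : r ≤ m) (hN : N = 2 ^ L * m)
    (nbad : ℕ) (nbl : ℕ → ℕ)
    (nb : ℕ) (hnb : nb = max nbad ((Icc 2 L).sup nbl)) :
    2 ^ L * m ^ 2 * (2 * nbad + 1) + N * r + 2 * (∑ ℓ ∈ Icc 2 (L - 1), 2 ^ (ℓ + 1) * r ^ 2)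
      + (∑ ℓ ∈ Icc 2 L, 2 ^ ℓ * r ^ 2 * (2 * nbl ℓ + 1)) + 2 ^ L * r * m
      ≤ 3 * N * m * (2 * nb + 3) := by
  subst hN
  have hnbad : nbad ≤ nb := hnb ▸ le_max_left _ _
  have hnbl : ∀ ℓ ∈ Icc 2 L, nbl ℓ ≤ nb := fun ℓ hℓ ↦
    hnb ▸ (le_sup hℓ).trans (le_max_right _ _)
  have hinner : ∑ ℓ ∈ Icc 2 (L - 1), 2 ^ (ℓ + 1) * r ^ 2 ≤ 2 ^ L * (2 * m ^ 2) := by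
    simp_rw [pow_succ, mul_assoc]
    exact sum_two_pow_mul_le _ (fun ℓ hℓ ↦ by simp only [mem_Icc] at hℓ; omega)
      fun _ _ ↦ by gcongr
  have hband : ∑ ℓ ∈ Icc 2 L, 2 ^ ℓ * r ^ 2 * (2 * nbl ℓ + 1)
      ≤ 2 ^ (L + 1) * (m ^ 2 * (2 * nb + 1)) := by
    simp_rw [mul_assoc]
    exact sum_two_pow_mul_le _ (fun ℓ hℓ ↦ Nat.lt_succ_of_le (mem_Icc.1 hℓ).2)
      fun ℓ hℓ ↦ by gcongr; exact hnbl ℓ hℓ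
  calc _ ≤ 2 ^ L * m ^ 2 * (2 * nb + 1) + 2 ^ L * m * m + 2 * (2 ^ L * (2 * m ^ 2))
        + 2 ^ (L + 1) * (m ^ 2 * (2 * nb + 1)) + 2 ^ L * m * m := by gcongr
    _ = 3 * (2 ^ L * m) * m * (2 * nb + 3) := by ring

/-- the parameter count of the linear H^2 neural network is bounded
by `3 N m (2 n_b + 3)`, where `n_b` is the maximum of all band sizes. -/
theorem h2_linear_param_count (L m r N : ℕ) (hL : 2 ≤ L) (hm : 1 ≤ m) (hr : 1 ≤ r)
    (hrm : r ≤ m) (hN : N = 2 ^ L * m)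
    (nbad : ℕ) (hnbad : 1 ≤ nbad) (nbl : ℕ → ℕ) (hnbl : ∀ ℓ ∈ Icc 2 L, 1 ≤ nbl ℓ)
    (nb : ℕ) (hnb : nb = max nbad ((Icc 2 L).sup nbl)) :
    2 ^ L * m ^ 2 * (2 * nbad + 1) + N * r + 2 * (∑ ℓ ∈ Icc 2 (L - 1), 2 ^ (ℓ + 1) * r ^ 2)
      + (∑ ℓ ∈ Icc 2 L, 2 ^ ℓ * r ^ 2 * (2 * nbl ℓ + 1)) + 2 ^ L * r * m
      ≤ 3 * N * m * (2 * nb + 3) :=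
  h2_linear_param_count_general L m r N hrm hN nbad nbl nb hnb
end

section
/- The parameter count of the CNN implementation of MNN-H^2 grows logarithmically in N: with r, m, K, n_b fixed and N = 2^L m, one has N_{p,CNN} ≤ C log₂(N) for a constant C = m²(4 + K(2n_b+1)) depending only on m, K, n_b, for all L ≥ 3. -/
open Finset

/-! Every term of the count is at most `m²` times a factor that is linear in `L`
(using `r ≤ m` and that all band sizes are at most `n_b`), so the whole count is at most
`m² (4 + K (2 n_b + 1)) L`, and `L ≤ log₂ (2^L m)` because `m ≥ 1`. -/

theorem Nat.le_log_pow_mul {b m : ℕ} (hb : 1 < b) (hm : 1 ≤ m) (L : ℕ) :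
    L ≤ Nat.log b (b ^ L * m) :=
  Nat.le_log_of_pow_le hb (Nat.le_mul_of_pos_right _ hm)

theorem mnn_h2_cnn_param_log_bound_general (L m r N K nb : ℕ) (hL : 3 ≤ L) (hm : 1 ≤ m)
    (hrm : r ≤ m) (hN : N = 2 ^ L * m)
    (nbad : ℕ) (hnbad : nbad ≤ nb) (nbl : ℕ → ℕ) (hnbl : ∀ ℓ ∈ Icc 2 L, nbl ℓ ≤ nb) :
    (N / 2 ^ L) * r + 4 * (L - 3 + 1) * r ^ 2
      + K * (∑ ℓ ∈ Icc 2 L, r ^ 2 * (2 * nbl ℓ + 1)) + r * m + m ^ 2 * K * (2 * nbad + 1)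
      ≤ m ^ 2 * (4 + K * (2 * nb + 1)) * Nat.log 2 N := by
  subst hN
  have hlog := Nat.le_log_pow_mul one_lt_two hm L
  have hr2 : r ^ 2 ≤ m ^ 2 := Nat.pow_le_pow_left hrm 2
  obtain ⟨t, rfl⟩ : ∃ t, L = t + 3 := ⟨L - 3, by omega⟩
  have hband : ∑ ℓ ∈ Icc 2 (t + 3), r ^ 2 * (2 * nbl ℓ + 1) ≤ (t + 2) * (m ^ 2 * (2 * nb + 1)) := by
    have := sum_le_card_nsmul _ _ _ fun ℓ hℓ =>
      Nat.mul_le_mul hr2 (Nat.add_le_add_right (Nat.mul_le_mul_left 2 (hnbl ℓ hℓ)) 1)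
    rwa [smul_eq_mul, Nat.card_Icc, show t + 3 + 1 - 2 = t + 2 by omega] at this
  calc _ ≤ m * m + 4 * (t + 1) * m ^ 2 + K * ((t + 2) * (m ^ 2 * (2 * nb + 1))) + m * m
          + m ^ 2 * K * (2 * nb + 1) := by
        rw [Nat.mul_div_cancel_left m (by positivity), Nat.add_sub_cancel]
        gcongr
    _ ≤ m ^ 2 * (4 + K * (2 * nb + 1)) * (t + 3) := by
        ring_nf
        omega
    _ ≤ _ := Nat.mul_le_mul_left _ hlog

/-- the CNN parameter count of MNN-H^2 grows logarithmically in
`N = 2^L m`: it is bounded by `C log₂ N` with `C = m^2 (4 + K (2 n_b + 1))`. -/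
theorem mnn_h2_cnn_param_log_bound (L m r N K nb : ℕ) (hL : 3 ≤ L) (hm : 1 ≤ m)
    (hr : 1 ≤ r) (hrm : r ≤ m) (hN : N = 2 ^ L * m) (hK : 1 ≤ K) (hnb : 1 ≤ nb)
    (nbad : ℕ) (hnbad : nbad ≤ nb) (nbl : ℕ → ℕ) (hnbl : ∀ ℓ ∈ Icc 2 L, nbl ℓ ≤ nb) :
    (N / 2 ^ L) * r + 4 * (L - 3 + 1) * r ^ 2
      + K * (∑ ℓ ∈ Icc 2 L, r ^ 2 * (2 * nbl ℓ + 1)) + r * m + m ^ 2 * K * (2 * nbad + 1)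
      ≤ m ^ 2 * (4 + K * (2 * nb + 1)) * Nat.log 2 N :=
  mnn_h2_cnn_param_log_bound_general L m r N K nb hL hm hrm hN nbad hnbad nbl hnbl
end

section
/- If an operator M: R^N → R^N commutes with the cyclic shift operator (T M(v) = M(T v) for the shift T and all v), and M is given by a single locally connected layer M(v)_{c',i} = φ(Σ_j Σ_c W_{c',c;i,j} v_{c,j} + b_{c',i}) with stride s = 1 and cyclic indexing, where φ is injective, then there exist weights W̃_{c',c;k} and biases b̃_{c'} independent of i such that W_{c',c;i,j} can be replaced by W̃_{c',c;j-i} and b_{c',i} = b̃_{c'}, i.e., the layer is a convolutional layer. -/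
/-- if a single locally connected layer (stride 1, cyclic
indexing, injective activation, non-aliasing window `w ≤ N`) commutes with the
cyclic shift, then its weights and biases are independent of the spatial
position, i.e. the layer is a convolutional layer. -/
theorem shift_equivariant_lc_is_cnn (N α α' w : ℕ) (hN : 0 < N) (hw : w ≤ N)
    (φ : ℝ → ℝ) (hφ : Function.Injective φ)
    (W : Fin α' → Fin α → ZMod N → Fin w → ℝ) (b : Fin α' → ZMod N → ℝ)
    (M : (Fin α → ZMod N → ℝ) → (Fin α' → ZMod N → ℝ))
    (hM : ∀ v c' i, M v c' i =
      φ ((∑ k : Fin w, ∑ c : Fin α, W c' c i k * v c (i + (k : ℕ))) + b c' i))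
    (hcomm : ∀ v c' i, M (fun c i0 => v c (i0 - 1)) c' i = M v c' (i - 1)) :
    ∃ (W' : Fin α' → Fin α → Fin w → ℝ) (b' : Fin α' → ℝ),
      (∀ c' c i k, W c' c i k = W' c' c k) ∧ (∀ c' i, b c' i = b' c') := by
  haveI : NeZero N := ⟨hN.ne'⟩
  have key : ∀ (v : Fin α → ZMod N → ℝ) (c' : Fin α') (i : ZMod N),
      (∑ k : Fin w, ∑ c : Fin α, W c' c i k * v c (i - 1 + (k : ℕ))) + b c' i
      = (∑ k : Fin w, ∑ c : Fin α, W c' c (i - 1) k * v c (i - 1 + (k : ℕ)))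
          + b c' (i - 1) := by
    intro v c' i
    have h := hcomm v c' i
    rw [hM, hM] at h
    have h2 := hφ h
    simp_rw [show ∀ x : ZMod N, i + x - 1 = i - 1 + x from fun x => by ring] at h2
    exact h2
  have hb : ∀ c' i, b c' i = b c' (i - 1) := by
    intro c' i
    have := key (fun _ _ => 0) c' i
    simpa using this
  have hb0 : ∀ (c' : Fin α') (i : ZMod N), b c' i = b c' 0 := by
    intro c' i
    have hn : ∀ n : ℕ, b c' (n : ZMod N) = b c' 0 := by
      intro n
      induction n with
      | zero => simp
      | succ m ih =>
        have h1 := hb c' ((m : ZMod N) + 1)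
        rw [add_sub_cancel_right] at h1
        push_cast
        rw [h1, ih]
    have := hn i.val
    rwa [ZMod.natCast_val, ZMod.cast_id] at this
  have hinj : ∀ k k' : Fin w, ((k : ℕ) : ZMod N) = ((k' : ℕ) : ZMod N) → k = k' := by
    intro k k' h
    have hk := ZMod.val_cast_of_lt (lt_of_lt_of_le k.isLt hw)
    have hk' := ZMod.val_cast_of_lt (lt_of_lt_of_le k'.isLt hw)
    exact Fin.ext (by rw [← hk, ← hk', h])
  have hW : ∀ c' c0 i k0, W c' c0 i k0 = W c' c0 (i - 1) k0 := by
    intro c' c0 i k0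
    have hkey := key
      (fun c j => if c = c0 ∧ j = i - 1 + ((k0 : ℕ) : ZMod N) then (1 : ℝ) else 0) c' i
    have hiff : ∀ k : Fin w,
        (i - 1 + ((k : ℕ) : ZMod N) = i - 1 + ((k0 : ℕ) : ZMod N)) ↔ k = k0 := by
      intro k
      rw [add_right_inj]
      exact ⟨hinj k k0, by rintro rfl; rfl⟩
    simp only [hiff] at hkey
    simp only [mul_ite, mul_one, mul_zero] at hkey
    have hred : ∀ g : Fin α → Fin w → ℝ,
        (∑ y : Fin w, ∑ x : Fin α, if x = c0 ∧ y = k0 then g x y else 0) = g c0 k0 := by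
      intro g
      simp [ite_and, Finset.sum_ite_eq']
    rw [hred, hred, hb c' i] at hkey
    linarith [hkey]
  have hW0 : ∀ c' c (i : ZMod N) k, W c' c i k = W c' c 0 k := by
    intro c' c i k
    have hn : ∀ n : ℕ, W c' c (n : ZMod N) k = W c' c 0 k := by
      intro n
      induction n with
      | zero => simp
      | succ m ih =>
        have h1 := hW c' c ((m : ZMod N) + 1) k
        rw [add_sub_cancel_right] at h1
        push_cast
        rw [h1, ih]
    have := hn i.val
    rwa [ZMod.natCast_val, ZMod.cast_id] at this
  exact ⟨fun c' c k => W c' c 0 k, fun c' => b c' 0,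
    fun c' c i k => hW0 c' c i k, fun c' i => hb0 c' i⟩
end
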